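/- arXiv:2005.00049 — 8 statements merged into one kernel-verified Lean document; each statement's English description precedes it below -/
import Mathlib

section
/- The set {(s,e,i,r) : s ≥ 0, e ≥ 0, i ≥ 0, r ≥ 0, s + e + i + r ≤ 1} is positively invariant under the flow of the SEIR system s' = -β s i, e' = β s i - α e, i' = α e - γ i, r' = γ i, for α, β, γ > 0. -/
/-! `s` solves the scalar linear equation `s' = (-β i) s` and `(e, i)` solves the linear system
`e' = -α e + (β s) i`, `i' = α e - γ i`, whose off-diagonal coefficients `β s` and `α` are
nonnegative once `s` is. A linear system with nonnegative off-diagonal coefficients keeps the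
closed positive quadrant invariant: the largest negative part `max (-p) (-q) 0` of a solution
satisfies a linear differential inequality and vanishes at the start, so it vanishes by Gronwall.
Then `r' = γ i ≥ 0`, and `s + e + i + r` is conserved. -/

open Set Filter Topology

lemma eventually_lt_add_mul_sub_of_hasDerivAt {g : ℝ → ℝ} {g' x b r : ℝ}
    (hg : HasDerivAt g g' x) (hgb : g x ≤ b) (hr : 0 < r) (hg' : g x = b → g' < r) :
    ∀ᶠ z in 𝓝[>] x, g z < b + r * (z - x) := by
  rcases hgb.lt_or_eq with hlt | heq
  · have hnear : ∀ᶠ z in 𝓝[>] x, g z < b :=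
      nhdsWithin_le_nhds (hg.continuousAt.eventually_lt continuousAt_const hlt)
    filter_upwards [hnear, self_mem_nhdsWithin] with z hz (hxz : x < z)
    nlinarith
  · have hslope : ∀ᶠ z in 𝓝[>] x, slope g x z < r :=
      hg.hasDerivWithinAt.limsup_slope_le' (lt_irrefl x) (hg' heq)
    filter_upwards [hslope, self_mem_nhdsWithin] with z hz (hxz : x < z)
    rw [slope_def_field, div_lt_iff₀ (sub_pos.2 hxz)] at hz
    linarith

lemma neg_linear_lt_of_cooperative {u v a b f K r : ℝ} (hu : -u = f) (hv : -v ≤ f) (hf : 0 ≤ f)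
    (hb : 0 ≤ b) (hK : |a| + b ≤ K) (hr : K * f < r) : -(a * u + b * v) < r :=
  calc -(a * u + b * v) = a * f + b * -v := by rw [← hu]; ring
    _ ≤ |a| * f + b * f := by gcongr; exact le_abs_self a
    _ = (|a| + b) * f := by ring
    _ ≤ K * f := by gcongr
    _ < r := hr

theorem nonneg_of_hasDerivAt_cooperative_of_bound {p q a b c d : ℝ → ℝ} {t₀ T K : ℝ}
    (hK : ∀ t ∈ Ico t₀ T, |a t| + b t ≤ K ∧ |d t| + c t ≤ K)
    (hb₀ : ∀ t ∈ Ico t₀ T, 0 ≤ b t) (hc₀ : ∀ t ∈ Ico t₀ T, 0 ≤ c t)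
    (hp : ∀ t, HasDerivAt p (a t * p t + b t * q t) t)
    (hq : ∀ t, HasDerivAt q (c t * p t + d t * q t) t)
    (hp₀ : 0 ≤ p t₀) (hq₀ : 0 ≤ q t₀) :
    ∀ t ∈ Icc t₀ T, 0 ≤ p t ∧ 0 ≤ q t := by
  set f : ℝ → ℝ := fun t => max (max (-p t) (-q t)) 0
  have hpf : ∀ t, -p t ≤ f t := fun t => (le_max_left _ _).trans (le_max_left _ _)
  have hqf : ∀ t, -q t ≤ f t := fun t => (le_max_right _ _).trans (le_max_left _ _)
  have hf₀ : ∀ t, 0 ≤ f t := fun t => le_max_right _ _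
  have hf_cont : Continuous f :=
    ((continuous_iff_continuousAt.2 fun t => (hp t).continuousAt).neg.max
      (continuous_iff_continuousAt.2 fun t => (hq t).continuousAt).neg).max continuous_const
  have hslope : ∀ x ∈ Ico t₀ T, ∀ r, K * f x < r →
      ∃ᶠ z in 𝓝[>] x, (z - x)⁻¹ * (f z - f x) < r := by
    intro x hx r hr
    have hr₀ : 0 < r := lt_of_le_of_lt
      (mul_nonneg ((add_nonneg (abs_nonneg _) (hb₀ x hx)).trans (hK x hx).1) (hf₀ x)) hr
    have hp_near := eventually_lt_add_mul_sub_of_hasDerivAt (hp x).neg (hpf x) hr₀ fun h =>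
      neg_linear_lt_of_cooperative h (hqf x) (hf₀ x) (hb₀ x hx) (hK x hx).1 hr
    have hq_near := eventually_lt_add_mul_sub_of_hasDerivAt (hq x).neg (hqf x) hr₀ fun h => by
      rw [add_comm]
      exact neg_linear_lt_of_cooperative h (hpf x) (hf₀ x) (hc₀ x hx) (hK x hx).2 hr
    refine Eventually.frequently ?_
    filter_upwards [hp_near, hq_near, self_mem_nhdsWithin] with z hpz hqz (hxz : x < z)
    have hfz : f z < f x + r * (z - x) :=
      max_lt (max_lt hpz hqz) (by nlinarith [hf₀ x])
    rw [inv_mul_eq_div, div_lt_iff₀ (sub_pos.2 hxz)]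
    linarith
  have hf_start : f t₀ ≤ 0 := max_le (max_le (neg_nonpos.2 hp₀) (neg_nonpos.2 hq₀)) le_rfl
  have hf_zero := le_gronwallBound_of_liminf_deriv_right_le hf_cont.continuousOn hslope hf_start
    fun x _ => (add_zero (K * f x)).ge
  intro t ht
  have hft : f t ≤ 0 := (hf_zero t ht).trans_eq (gronwallBound_ε0_δ0 _ _)
  exact ⟨by linarith [hpf t], by linarith [hqf t]⟩

theorem nonneg_of_hasDerivAt_cooperative {p q a b c d : ℝ → ℝ} {t₀ T : ℝ}
    (ha : ContinuousOn a (Icc t₀ T)) (hb : ContinuousOn b (Icc t₀ T))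
    (hc : ContinuousOn c (Icc t₀ T)) (hd : ContinuousOn d (Icc t₀ T))
    (hb₀ : ∀ t ∈ Icc t₀ T, 0 ≤ b t) (hc₀ : ∀ t ∈ Icc t₀ T, 0 ≤ c t)
    (hp : ∀ t, HasDerivAt p (a t * p t + b t * q t) t)
    (hq : ∀ t, HasDerivAt q (c t * p t + d t * q t) t)
    (hp₀ : 0 ≤ p t₀) (hq₀ : 0 ≤ q t₀) :
    ∀ t ∈ Icc t₀ T, 0 ≤ p t ∧ 0 ≤ q t := by
  obtain ⟨K₁, hK₁⟩ := isCompact_Icc.exists_bound_of_continuousOn (ha.abs.add hb)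
  obtain ⟨K₂, hK₂⟩ := isCompact_Icc.exists_bound_of_continuousOn (hd.abs.add hc)
  refine nonneg_of_hasDerivAt_cooperative_of_bound (K := max K₁ K₂) (fun t ht => ?_)
    (fun t ht => hb₀ t (Ico_subset_Icc_self ht)) (fun t ht => hc₀ t (Ico_subset_Icc_self ht))
    hp hq hp₀ hq₀
  have ht' := Ico_subset_Icc_self ht
  exact ⟨(le_abs_self _).trans ((hK₁ t ht').trans (le_max_left _ _)),
    (le_abs_self _).trans ((hK₂ t ht').trans (le_max_right _ _))⟩

theorem nonneg_of_hasDerivAt_linear {p a : ℝ → ℝ} {t₀ T : ℝ} (ha : ContinuousOn a (Icc t₀ T))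
    (hp : ∀ t, HasDerivAt p (a t * p t) t) (hp₀ : 0 ≤ p t₀) :
    ∀ t ∈ Icc t₀ T, 0 ≤ p t := by
  exact fun t ht => (nonneg_of_hasDerivAt_cooperative ha continuousOn_const continuousOn_const ha
    (fun _ _ => le_rfl) (fun _ _ => le_rfl) (fun t => (hp t).congr_deriv (by simp))
    (fun t => (hp t).congr_deriv (by simp)) hp₀ hp₀ t ht).1

/-- the set {s,e,i,r ≥ 0, s+e+i+r ≤ 1} is positively invariant under the
SEIR flow. -/
theorem seir_invariant_region
    (α β γ : ℝ) (hα : 0 < α) (hβ : 0 < β) (hγ : 0 < γ)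
    (s e i r : ℝ → ℝ)
    (hs : ∀ t, HasDerivAt s (-β * s t * i t) t)
    (he : ∀ t, HasDerivAt e (β * s t * i t - α * e t) t)
    (hi : ∀ t, HasDerivAt i (α * e t - γ * i t) t)
    (hr : ∀ t, HasDerivAt r (γ * i t) t)
    (h0 : 0 ≤ s 0 ∧ 0 ≤ e 0 ∧ 0 ≤ i 0 ∧ 0 ≤ r 0 ∧ s 0 + e 0 + i 0 + r 0 ≤ 1) :
    ∀ t ≥ (0 : ℝ),
      0 ≤ s t ∧ 0 ≤ e t ∧ 0 ≤ i t ∧ 0 ≤ r t ∧ s t + e t + i t + r t ≤ 1 := by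
  obtain ⟨hs₀, he₀, hi₀, hr₀, hN₀⟩ := h0
  intro T hT
  have hs_cont : Continuous s := Differentiable.continuous fun t => (hs t).differentiableAt
  have hi_cont : Continuous i := Differentiable.continuous fun t => (hi t).differentiableAt
  have hs_nonneg : ∀ t ∈ Icc 0 T, 0 ≤ s t :=
    nonneg_of_hasDerivAt_linear (a := fun t => -β * i t) (by fun_prop)
      (fun t => (hs t).congr_deriv (by ring)) hs₀
  have hei_nonneg : ∀ t ∈ Icc 0 T, 0 ≤ e t ∧ 0 ≤ i t :=
    nonneg_of_hasDerivAt_cooperative (a := fun _ => -α) (b := fun t => β * s t)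
      (c := fun _ => α) (d := fun _ => -γ) (by fun_prop) (by fun_prop) (by fun_prop)
      (by fun_prop) (fun t ht => mul_nonneg hβ.le (hs_nonneg t ht)) (fun _ _ => hα.le)
      (fun t => (he t).congr_deriv (by ring)) (fun t => (hi t).congr_deriv (by ring)) he₀ hi₀
  have hr_mono : MonotoneOn r (Icc 0 T) :=
    monotoneOn_of_hasDerivWithinAt_nonneg (convex_Icc 0 T)
      (Differentiable.continuous fun t => (hr t).differentiableAt).continuousOn
      (fun t _ => (hr t).hasDerivWithinAt)
      (fun t ht => mul_nonneg hγ.le (hei_nonneg t (interior_subset ht)).2)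
  have hN : ∀ t, HasDerivAt (fun t => s t + e t + i t + r t) 0 t := fun t =>
    ((((hs t).add (he t)).add (hi t)).add (hr t)).congr_deriv (by ring)
  have hN_const := is_const_of_deriv_eq_zero (fun t => (hN t).differentiableAt)
    (fun t => (hN t).deriv) T 0
  have hT' : T ∈ Icc 0 T := ⟨hT, le_rfl⟩
  exact ⟨hs_nonneg T hT', (hei_nonneg T hT').1, (hei_nonneg T hT').2,
    hr₀.trans (hr_mono ⟨le_rfl, hT⟩ hT' hT), hN_const.trans_le hN₀⟩
end

section
/- If γ > β > 0, then for each sufficiently small ε ≥ 0 the equation γ log s - β s = γ log(1 - ε) - β has a unique solution s*(ε) in (0, 1], and s*(ε) = 1 - γ ε/(γ - β) + o(ε) as ε → 0+. -/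
/-!
The map `x ↦ γ log x - β x` is strictly increasing on `(0, 1]`, since its derivative `γ / x - β`
exceeds `γ - β > 0` there, and it maps `(0, 1]` onto `(-∞, -β]` because it tends to `-∞` at `0`.
Hence `s*(ε)` is its inverse evaluated at `γ log (1 - ε) - β ≤ -β`. The inverse of a monotone
bijection between left neighbourhoods is continuous, so it is differentiable at the endpoint `-β`
with derivative `1 / (γ - β)`, and the chain rule gives `s*'(0⁺) = -γ / (γ - β)`.
-/

open Real Set Filter Asymptotics Topology Function

theorem MonotoneOn.hasDerivWithinAt_invFunOn_Iic {f : ℝ → ℝ} {s t : Set ℝ} {a f' : ℝ}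
    (hmono : MonotoneOn f s) (hbij : BijOn f s t) (ha : a ∈ s) (hs : s ∈ 𝓝[≤] a)
    (ht : t ∈ 𝓝[≤] f a) (hf : HasDerivWithinAt f f' s a) (hf' : f' ≠ 0) :
    HasDerivWithinAt (invFunOn f s) f'⁻¹ (Iic (f a)) (f a) := by
  set ψ := invFunOn f s
  have hinv : InvOn ψ f s t := hbij.invOn_invFunOn
  have hψbij : BijOn ψ t s := hbij.symm hinv.symm
  have hψa : ψ (f a) = a := hinv.1 ha
  have hψmono : MonotoneOn ψ t := monotoneOn_of_rightInvOn_of_mapsTo hmono hinv.2 hψbij.mapsTo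
  have hψcont : ContinuousWithinAt ψ (t ∩ Iic (f a)) (f a) :=
    (continuousWithinAt_left_of_monotoneOn_of_image_mem_nhdsWithin hψmono ht
      (by rwa [hψbij.image_eq, hψa])).mono inter_subset_right
  have hψderiv : HasDerivWithinAt ψ f'⁻¹ (t ∩ Iic (f a)) (f a) := by
    have hf₁ : HasFDerivWithinAt f
        ((ContinuousLinearEquiv.unitsEquivAut ℝ (Units.mk0 f' hf') : ℝ →L[ℝ] ℝ)) s (ψ (f a)) := by
      rw [hψa]; exact hf
    have := hf₁.of_local_left_inverse
      (hψcont.tendsto_nhdsWithin (hψbij.mapsTo.mono_left inter_subset_left))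
      ⟨hbij.mapsTo ha, self_mem_Iic⟩ (eventually_nhdsWithin_of_forall fun y hy => hinv.2 hy.1)
    simpa using this.hasDerivWithinAt
  exact hψderiv.mono_of_mem_nhdsWithin (inter_mem ht self_mem_nhdsWithin)

noncomputable def finalSizeFun (β γ x : ℝ) : ℝ := γ * log x - β * x

/-- `s*(ε)`; meaningful for `0 ≤ ε < 1`, where `γ log (1 - ε) - β` lies in `(-∞, -β]`. -/
noncomputable def finalSize (β γ ε : ℝ) : ℝ :=
  invFunOn (finalSizeFun β γ) (Ioc 0 1) (γ * log (1 - ε) - β)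

section

variable {β γ : ℝ}

theorem finalSizeFun_one : finalSizeFun β γ 1 = -β := by simp [finalSizeFun]

theorem hasDerivAt_finalSizeFun {x : ℝ} (hx : x ≠ 0) :
    HasDerivAt (finalSizeFun β γ) (γ * x⁻¹ - β) x := by
  have := ((hasDerivAt_log hx).const_mul γ).sub ((hasDerivAt_id x).const_mul β)
  rw [mul_one] at this
  exact this

theorem continuousOn_finalSizeFun : ContinuousOn (finalSizeFun β γ) (Ioi 0) :=
  fun _ hx => (hasDerivAt_finalSizeFun (ne_of_gt hx)).continuousAt.continuousWithinAt

theorem strictMonoOn_finalSizeFun (hγ : 0 < γ) (hβγ : β ≤ γ) :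
    StrictMonoOn (finalSizeFun β γ) (Ioc 0 1) := by
  refine strictMonoOn_of_deriv_pos (convex_Ioc 0 1)
    (continuousOn_finalSizeFun.mono Ioc_subset_Ioi_self) fun x hx => ?_
  rw [interior_Ioc] at hx
  rw [(hasDerivAt_finalSizeFun hx.1.ne').deriv]
  have : γ < γ * x⁻¹ := lt_mul_of_one_lt_right hγ ((one_lt_inv₀ hx.1).mpr hx.2)
  linarith

theorem surjOn_finalSizeFun (hβ : 0 ≤ β) (hγ : 0 < γ) :
    SurjOn (finalSizeFun β γ) (Ioc 0 1) (Iic (-β)) := by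
  intro c (hc : c ≤ -β)
  -- `a` solves `γ log a = c`, so the value at `a` undershoots `c` by `β a ≥ 0`.
  set a := exp (c / γ)
  have ha₀ : 0 < a := exp_pos _
  have ha₁ : a ≤ 1 := exp_le_one_iff.mpr (div_nonpos_of_nonpos_of_nonneg (by linarith) hγ.le)
  have hfa : finalSizeFun β γ a ≤ c := by
    simp only [finalSizeFun, a, log_exp, mul_div_cancel₀ c hγ.ne']
    nlinarith
  obtain ⟨x, hx, hfx⟩ := intermediate_value_Icc ha₁
    (continuousOn_finalSizeFun.mono fun y hy => ha₀.trans_le hy.1)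
    ⟨hfa, finalSizeFun_one (γ := γ) ▸ hc⟩
  exact ⟨x, ⟨ha₀.trans_le hx.1, hx.2⟩, hfx⟩

theorem bijOn_finalSizeFun (hβ : 0 ≤ β) (hγ : 0 < γ) (hβγ : β ≤ γ) :
    BijOn (finalSizeFun β γ) (Ioc 0 1) (Iic (-β)) := by
  have hmono := strictMonoOn_finalSizeFun hγ hβγ
  refine ⟨fun x hx => ?_, hmono.injOn, surjOn_finalSizeFun hβ hγ⟩
  rw [mem_Iic, ← finalSizeFun_one (γ := γ)]
  exact hmono.monotoneOn hx ⟨one_pos, le_rfl⟩ hx.2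

theorem mapsTo_log_one_sub (hγ : 0 ≤ γ) :
    MapsTo (fun ε => γ * log (1 - ε) - β) (Ico 0 1) (Iic (-β)) := by
  intro ε ⟨hε₀, hε₁⟩
  have : log (1 - ε) ≤ 0 := log_nonpos (by linarith) (by linarith)
  simp only [mem_Iic]
  nlinarith

theorem finalSize_mem_Ioc (hβ : 0 ≤ β) (hγ : 0 < γ) (hβγ : β ≤ γ) {ε : ℝ} (hε : ε ∈ Ico 0 1) :
    finalSize β γ ε ∈ Ioc 0 1 :=
  ((bijOn_finalSizeFun hβ hγ hβγ).symm (bijOn_finalSizeFun hβ hγ hβγ).invOn_invFunOn.symm).mapsTo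
    (mapsTo_log_one_sub hγ.le hε)

theorem finalSizeFun_finalSize (hβ : 0 ≤ β) (hγ : 0 < γ) {ε : ℝ} (hε : ε ∈ Ico 0 1) : finalSizeFun β γ (finalSize β γ ε) = γ * log (1 - ε) - β :=
  (surjOn_finalSizeFun hβ hγ).rightInvOn_invFunOn (mapsTo_log_one_sub hγ.le hε)

theorem eq_finalSize_of_finalSizeFun_eq (hγ : 0 < γ) (hβγ : β ≤ γ) {ε x : ℝ}
    (hx : x ∈ Ioc 0 1) (h : finalSizeFun β γ x = γ * log (1 - ε) - β) : x = finalSize β γ ε :=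
  ((strictMonoOn_finalSizeFun hγ hβγ).injOn.leftInvOn_invFunOn hx).symm.trans
    (congrArg _ h)

theorem finalSize_zero (hγ : 0 < γ) (hβγ : β ≤ γ) : finalSize β γ 0 = 1 :=
  (eq_finalSize_of_finalSizeFun_eq hγ hβγ ⟨one_pos, le_rfl⟩ (by simp [finalSizeFun])).symm

theorem hasDerivWithinAt_finalSize (hβ : 0 ≤ β) (hγ : 0 < γ) (hβγ : β < γ) :
    HasDerivWithinAt (finalSize β γ) (-γ / (γ - β)) (Ico 0 1) 0 := by
  have hinv : HasDerivWithinAt (invFunOn (finalSizeFun β γ) (Ioc 0 1)) (γ - β)⁻¹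
      (Iic (-β)) (-β) := by
    have := (strictMonoOn_finalSizeFun hγ hβγ.le).monotoneOn.hasDerivWithinAt_invFunOn_Iic
      (bijOn_finalSizeFun hβ hγ hβγ.le) ⟨one_pos, le_rfl⟩ (Ioc_mem_nhdsLE one_pos)
      (by rw [finalSizeFun_one]; exact self_mem_nhdsWithin)
      (hasDerivAt_finalSizeFun one_ne_zero).hasDerivWithinAt (by simp; linarith)
    simpa [finalSizeFun_one] using this
  have hrhs : HasDerivAt (fun ε => γ * log (1 - ε) - β) (-γ) 0 := by
    have := ((((hasDerivAt_id (0 : ℝ)).const_sub 1).log (by norm_num)).const_mul γ).sub_const β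
    exact this.congr_deriv (by simp)
  have := hinv.comp_of_eq 0 hrhs.hasDerivWithinAt (mapsTo_log_one_sub hγ.le) (by simp)
  exact this.congr_deriv (by ring)

end

/-- in the subcritical regime γ > β, for small ε ≥ 0 the equation
γ log s - β s = γ log(1-ε) - β has a unique solution s*(ε) ∈ (0,1], with
s*(ε) = 1 - γ ε/(γ-β) + o(ε) as ε → 0⁺. -/
theorem seir_subcritical_final_size
    (β γ : ℝ) (hβ : 0 < β) (hγβ : β < γ) :
    ∃ ε₀ > (0 : ℝ), ∃ sStar : ℝ → ℝ,
      (∀ ε ∈ Set.Ico (0 : ℝ) ε₀,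
        (sStar ε ∈ Set.Ioc (0 : ℝ) 1 ∧
          γ * Real.log (sStar ε) - β * sStar ε = γ * Real.log (1 - ε) - β) ∧
        ∀ x ∈ Set.Ioc (0 : ℝ) 1,
          γ * Real.log x - β * x = γ * Real.log (1 - ε) - β → x = sStar ε) ∧
      (fun ε => sStar ε - (1 - γ * ε / (γ - β)))
        =o[nhdsWithin 0 (Set.Ioi 0)] (fun ε => ε) := by
  have hγ : 0 < γ := hβ.trans hγβ
  refine ⟨1, one_pos, finalSize β γ, fun ε hε =>
    ⟨⟨finalSize_mem_Ioc hβ.le hγ hγβ.le hε, finalSizeFun_finalSize hβ.le hγ hε⟩,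
      fun x hx => eq_finalSize_of_finalSizeFun_eq hγ hγβ.le hx⟩, ?_⟩
  have hderiv := (hasDerivWithinAt_finalSize hβ.le hγ hγβ).mono_of_mem_nhdsWithin
    (mem_of_superset (Ioo_mem_nhdsGT one_pos) Ioo_subset_Ico_self)
  refine hderiv.isLittleO.congr (fun ε => ?_) sub_zero
  rw [finalSize_zero hγ hγβ.le, sub_zero, smul_eq_mul]
  ring
end

section
/- For R₀ > 1, the equation e^{-R₀ r} + r = 1 has exactly one solution r in the open interval (0, 1), and this solution satisfies r > 1 - 1/R₀. -/
open Real Set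

/-!
The map `f r = exp (-R₀ r) + r` is strictly convex with `f 0 = 1`, so it takes the value `1` at
most once on `(0, ∞)`. At `r = 1 - 1/R₀` the inequality `R₀ < exp (R₀ - 1)` gives `f r < 1`,
which by convexity forces every positive root of `f r = 1` beyond this point, and `f 1 > 1`
provides one there by the intermediate value theorem.
-/

section StrictConvexOn

variable {𝕜 β : Type*} [Field 𝕜] [LinearOrder 𝕜] [IsStrictOrderedRing 𝕜]
  [AddCommMonoid β] [LinearOrder β] [IsOrderedAddMonoid β] [Module 𝕜 β] [PosSMulStrictMono 𝕜 β]
  {s : Set 𝕜} {f : 𝕜 → β}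

theorem StrictConvexOn.lt_of_mem_Ioo (hf : StrictConvexOn 𝕜 s f) {x y z : 𝕜} {c : β}
    (hx : x ∈ s) (hz : z ∈ s) (hy : y ∈ Ioo x z) (hfx : f x ≤ c) (hfz : f z ≤ c) : f y < c := by
  have hxz : x < z := hy.1.trans hy.2
  calc f y < max (f x) (f z) :=
        hf.lt_on_openSegment hx hz hxz.ne (by rwa [openSegment_eq_Ioo hxz])
    _ ≤ c := max_le hfx hfz

theorem StrictConvexOn.eq_of_lt_of_apply_eq (hf : StrictConvexOn 𝕜 s f) {x y z : 𝕜}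
    (hx : x ∈ s) (hy : y ∈ s) (hz : z ∈ s) (hxy : x < y) (hxz : x < z)
    (hfy : f y = f x) (hfz : f z = f x) : y = z := by
  rcases lt_trichotomy y z with hyz | hyz | hzy
  · exact absurd hfy (hf.lt_of_mem_Ioo hx hz ⟨hxy, hyz⟩ le_rfl hfz.le).ne
  · exact hyz
  · exact absurd hfz (hf.lt_of_mem_Ioo hx hy ⟨hxz, hzy⟩ le_rfl hfy.le).ne

end StrictConvexOn

theorem strictConvexOn_exp_mul {c : ℝ} (hc : c ≠ 0) :
    StrictConvexOn ℝ univ fun x => exp (c * x) := by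
  refine ⟨convex_univ, fun x _ y _ hxy a b ha hb hab => ?_⟩
  have hcxy : c * x ≠ c * y := (mul_right_injective₀ hc).ne hxy
  simpa only [smul_eq_mul, mul_add, mul_left_comm c] using
    strictConvexOn_exp.2 (mem_univ _) (mem_univ _) hcxy ha hb hab

theorem strictConvexOn_exp_neg_mul_add_id {R₀ : ℝ} (hR : R₀ ≠ 0) :
    StrictConvexOn ℝ univ fun r => exp (-R₀ * r) + r :=
  (strictConvexOn_exp_mul (neg_ne_zero.2 hR)).add_convexOn (convexOn_id convex_univ)

theorem exp_neg_mul_add_one_sub_one_div_lt_one {R₀ : ℝ} (hR : 1 < R₀) :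
    exp (-R₀ * (1 - 1 / R₀)) + (1 - 1 / R₀) < 1 := by
  have hR₀ : R₀ ≠ 0 := by positivity
  have hexp : R₀ < exp (R₀ - 1) := by
    simpa using add_one_lt_exp (sub_ne_zero.2 hR.ne')
  have hexp' : exp (1 - R₀) < 1 / R₀ := by
    rw [← neg_sub, exp_neg, one_div]
    exact inv_strictAnti₀ (by positivity) hexp
  have harg : -R₀ * (1 - 1 / R₀) = 1 - R₀ := by field_simp; ring
  linarith [harg ▸ hexp']

theorem one_sub_one_div_lt_of_exp_neg_mul_add_eq_one {R₀ r : ℝ} (hR : 1 < R₀)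
    (hr : 0 < r) (h : exp (-R₀ * r) + r = 1) : 1 - 1 / R₀ < r := by
  have hconv := strictConvexOn_exp_neg_mul_add_id (R₀ := R₀) (by positivity)
  have hlt := exp_neg_mul_add_one_sub_one_div_lt_one hR
  by_contra! hle
  rcases hle.lt_or_eq with hlt' | heq
  · have := hconv.lt_of_mem_Ioo (mem_univ 0) (mem_univ _) ⟨hr, hlt'⟩ (by simp) hlt.le
    exact this.ne h
  · exact hlt.ne (heq ▸ h)

theorem exists_mem_Ioo_exp_neg_mul_add_eq_one {R₀ : ℝ} (hR : 1 < R₀) :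
    ∃ r ∈ Ioo (1 - 1 / R₀) 1, exp (-R₀ * r) + r = 1 := by
  have ha : 1 - 1 / R₀ ≤ 1 := by
    have : 0 < 1 / R₀ := by positivity
    linarith
  have hcont : ContinuousOn (fun r => exp (-R₀ * r) + r) (Icc (1 - 1 / R₀) 1) := by fun_prop
  refine intermediate_value_Ioo ha hcont ⟨exp_neg_mul_add_one_sub_one_div_lt_one hR, ?_⟩
  simpa using exp_pos (-R₀)

/-- for R₀ > 1, the equation e^{-R₀ r} + r = 1 has exactly one
solution r ∈ (0,1), and this solution satisfies r > 1 - 1/R₀. -/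
theorem seir_epidemic_size_equation
    (R₀ : ℝ) (hR : 1 < R₀) :
    (∃! r : ℝ, r ∈ Set.Ioo (0 : ℝ) 1 ∧ Real.exp (-R₀ * r) + r = 1) ∧
    (∀ r ∈ Set.Ioo (0 : ℝ) 1, Real.exp (-R₀ * r) + r = 1 → 1 - 1 / R₀ < r) := by
  have hconv := strictConvexOn_exp_neg_mul_add_id (R₀ := R₀) (by positivity)
  have ha : 0 < 1 - 1 / R₀ := by
    have : 1 / R₀ < 1 := (div_lt_one (by positivity)).2 hR
    linarith
  obtain ⟨r, hr, hfr⟩ := exists_mem_Ioo_exp_neg_mul_add_eq_one hR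
  refine ⟨⟨r, ⟨⟨ha.trans hr.1, hr.2⟩, hfr⟩, fun s ⟨hs, hfs⟩ => ?_⟩,
    fun s hs hfs => one_sub_one_div_lt_of_exp_neg_mul_add_eq_one hR hs.1 hfs⟩
  exact hconv.eq_of_lt_of_apply_eq (mem_univ 0) (mem_univ s) (mem_univ r) hs.1 (ha.trans hr.1)
    (by simpa using hfs) (by simpa using hfr)
end

section
/- In the critical case β = γ, the solution s*(ε) ∈ (0,1) of log s - s = log(1 - ε) + ϑε - 1 satisfies s*(ε) = 1 - sqrt(2(1 - ϑ)ε) + o(√ε) as ε → 0+, for fixed ϑ ∈ [0, 1). -/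
/-!
Put `u = 1 - s*(ε)`. The equation becomes `-log (1 - u) - u = -log (1 - ε) - ϑ ε`, whose left
side is `u² / 2 + O(u³)` (and at least `u² / 2`) and whose right side is `(1 - ϑ) ε + O(ε²)`.
Hence `u → 0`, then `u² ~ 2 (1 - ϑ) ε`, and taking square roots `u ~ √(2 (1 - ϑ) ε)`, i.e.
`s*(ε) - (1 - √(2 (1 - ϑ) ε)) = o(√ε)`.
-/

open Real Set Filter Asymptotics Topology

theorem Asymptotics.IsEquivalent.sqrt {α : Type*} {l : Filter α} {u v : α → ℝ} (h : u ~[l] v)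
    (hv : ∀ᶠ x in l, 0 < v x) : (fun x => √(u x)) ~[l] fun x => √(v x) := by
  rw [isEquivalent_iff_tendsto_one (hv.mono fun x hx => (Real.sqrt_pos.2 hx).ne')]
  rw [isEquivalent_iff_tendsto_one (hv.mono fun x hx => hx.ne')] at h
  have h_sqrt := (Real.continuous_sqrt.tendsto 1).comp h
  rw [Real.sqrt_one] at h_sqrt
  refine h_sqrt.congr' (hv.mono fun x hx => ?_)
  simp [Real.sqrt_div' _ hx.le]

namespace Real

theorem sq_div_two_le_neg_log_one_sub_sub {x : ℝ} (h0 : 0 ≤ x) (h1 : x < 1) :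
    x ^ 2 / 2 ≤ -log (1 - x) - x := by
  have hs := hasSum_pow_div_log_of_abs_lt_one (by rwa [abs_of_nonneg h0])
  have h := sum_le_hasSum (Finset.range 2) (fun n _ => by positivity) hs
  norm_num [Finset.sum_range_succ] at h
  linarith

theorem neg_log_one_sub_sub_isEquivalent :
    (fun x : ℝ => -log (1 - x) - x) ~[𝓝 0] fun x => x ^ 2 / 2 := by
  have hcubic : (fun x : ℝ => -log (1 - x) - x - x ^ 2 / 2) =O[𝓝 0] fun x => x ^ 3 := by
    refine IsBigO.of_bound 2 ?_
    filter_upwards [Metric.ball_mem_nhds (0 : ℝ) (by norm_num : (0 : ℝ) < 1 / 2)] with x hx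
    rw [Metric.mem_ball, dist_zero_right, Real.norm_eq_abs] at hx
    have h := abs_log_sub_add_sum_range_le (hx.trans (by norm_num)) 2
    norm_num [Finset.sum_range_succ] at h
    rw [norm_eq_abs, norm_eq_abs, abs_pow]
    calc |-log (1 - x) - x - x ^ 2 / 2| = |x + x ^ 2 / 2 + log (1 - x)| := by
          rw [← abs_neg]; ring_nf
      _ ≤ |x| ^ 3 / (1 - |x|) := h
      _ ≤ 2 * |x| ^ 3 := by
          rw [div_le_iff₀ (by linarith)]; nlinarith [pow_nonneg (abs_nonneg x) 3]
  have hcubic_sq : (fun x : ℝ => x ^ 3) =o[𝓝 0] fun x => x ^ 2 / 2 := by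
    simpa only [div_eq_inv_mul] using
      (isLittleO_const_mul_right_iff (c := (2 : ℝ)⁻¹) (by norm_num)).2
        (isLittleO_pow_pow (𝕜 := ℝ) (by norm_num : 2 < 3))
  exact hcubic.trans_isLittleO hcubic_sq

theorem neg_log_one_sub_sub_mul_isEquivalent {θ : ℝ} (hθ : θ ≠ 1) :
    (fun x : ℝ => -log (1 - x) - θ * x) ~[𝓝 0] fun x => (1 - θ) * x := by
  have hquad : (fun x : ℝ => x ^ 2 / 2) =o[𝓝 0] fun x => (1 - θ) * x := by
    refine (isLittleO_const_mul_right_iff (sub_ne_zero.2 hθ.symm)).2 ?_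
    simpa only [div_eq_inv_mul] using
      (isLittleO_pow_id (𝕜 := ℝ) (by norm_num : 1 < 2)).const_mul_left 2⁻¹
  refine (neg_log_one_sub_sub_isEquivalent.trans_isLittleO hquad).add_isEquivalent IsEquivalent.refl
    |>.congr_left (Eventually.of_forall fun x => ?_)
  simp only [Pi.add_apply]
  ring

end Real

section NegLogOneSubSub

variable {α : Type*} {l : Filter α} {u v : α → ℝ}

theorem tendsto_zero_of_tendsto_neg_log_one_sub_sub (hu : ∀ᶠ x in l, 0 ≤ u x ∧ u x < 1)
    (h : Tendsto (fun x => -log (1 - u x) - u x) l (𝓝 0)) : Tendsto u l (𝓝 0) := by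
  have hsqrt : Tendsto (fun x => √(2 * (-log (1 - u x) - u x))) l (𝓝 0) := by
    simpa using (h.const_mul 2).sqrt
  refine squeeze_zero' (hu.mono fun x hx => hx.1) (hu.mono fun x hx => ?_) hsqrt
  refine (le_abs_self _).trans (Real.abs_le_sqrt ?_)
  linarith [Real.sq_div_two_le_neg_log_one_sub_sub hx.1 hx.2]

theorem isEquivalent_sqrt_two_mul_of_neg_log_one_sub_sub (hu : ∀ᶠ x in l, 0 ≤ u x ∧ u x < 1)
    (hv : ∀ᶠ x in l, 0 < v x) (hv₀ : Tendsto v l (𝓝 0))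
    (h : (fun x => -log (1 - u x) - u x) ~[l] v) : u ~[l] fun x => √(2 * v x) := by
  have hu₀ : Tendsto u l (𝓝 0) :=
    tendsto_zero_of_tendsto_neg_log_one_sub_sub hu (h.symm.tendsto_nhds hv₀)
  have hsq : (fun x => u x ^ 2 / 2) ~[l] v :=
    (Real.neg_log_one_sub_sub_isEquivalent.comp_tendsto hu₀).symm.trans h
  have hsq' : (fun x => u x ^ 2) ~[l] fun x => 2 * v x := by
    convert (IsEquivalent.refl (u := fun _ => (2 : ℝ))).mul hsq using 1 <;> ext x <;>
      simp [mul_div_cancel₀]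
  refine (hsq'.sqrt (hv.mono fun x hx => by positivity)).congr_left (hu.mono fun x hx => ?_)
  exact Real.sqrt_sq hx.1

end NegLogOneSubSub

/-- in the critical case β = γ, the solution s*(ε) ∈ (0,1) of
log s - s = log(1-ε) + ϑε - 1 satisfies
s*(ε) = 1 - √(2(1-ϑ)ε) + o(√ε) as ε → 0⁺, for fixed ϑ ∈ [0,1). -/
theorem seir_critical_final_size
    (ϑ : ℝ) (hϑ : ϑ ∈ Set.Ico (0 : ℝ) 1)
    (ε₀ : ℝ) (hε₀ : 0 < ε₀) (sStar : ℝ → ℝ)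
    (hsol : ∀ ε ∈ Set.Ioo (0 : ℝ) ε₀,
      sStar ε ∈ Set.Ioo (0 : ℝ) 1 ∧
        Real.log (sStar ε) - sStar ε = Real.log (1 - ε) + ϑ * ε - 1) :
    (fun ε => sStar ε - (1 - Real.sqrt (2 * (1 - ϑ) * ε)))
      =o[nhdsWithin 0 (Set.Ioi 0)] (fun ε => Real.sqrt ε) := by
  have hsol' : ∀ᶠ ε in 𝓝[>] (0 : ℝ), sStar ε ∈ Ioo 0 1 ∧
      log (sStar ε) - sStar ε = log (1 - ε) + ϑ * ε - 1 :=
    eventually_of_mem (Ioo_mem_nhdsGT hε₀) hsol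
  have hu : ∀ᶠ ε in 𝓝[>] (0 : ℝ), 0 ≤ 1 - sStar ε ∧ 1 - sStar ε < 1 :=
    hsol'.mono fun ε ⟨⟨hs₀, hs₁⟩, _⟩ => ⟨by linarith, by linarith⟩
  have hv : ∀ᶠ ε in 𝓝[>] (0 : ℝ), 0 < (1 - ϑ) * ε :=
    eventually_mem_nhdsWithin.mono fun ε (hε : 0 < ε) => mul_pos (by linarith [hϑ.2]) hε
  have hv₀ : Tendsto (fun ε => (1 - ϑ) * ε) (𝓝[>] 0) (𝓝 0) :=
    ((continuous_const_mul (1 - ϑ)).tendsto' 0 0 (mul_zero _)).mono_left nhdsWithin_le_nhds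
  have hlog : (fun ε => -log (1 - (1 - sStar ε)) - (1 - sStar ε)) ~[𝓝[>] 0]
      fun ε => (1 - ϑ) * ε :=
    ((Real.neg_log_one_sub_sub_mul_isEquivalent hϑ.2.ne).mono nhdsWithin_le_nhds).congr_left
      (hsol'.mono fun ε ⟨_, hε⟩ => by simp only [sub_sub_cancel]; linarith)
  have hequiv : (fun ε => 1 - sStar ε) ~[𝓝[>] 0] fun ε => √(2 * (1 - ϑ) * ε) := by
    simpa only [mul_assoc] using isEquivalent_sqrt_two_mul_of_neg_log_one_sub_sub hu hv hv₀ hlog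
  have hO : (fun ε => √(2 * (1 - ϑ) * ε)) =O[𝓝[>] 0] fun ε => √ε :=
    IsBigO.of_bound (√(2 * (1 - ϑ))) (Eventually.of_forall fun ε => by
      rw [Real.sqrt_mul (by linarith [hϑ.2]), norm_mul, norm_of_nonneg (Real.sqrt_nonneg _)])
  exact (hequiv.isLittleO.trans_isBigO hO).neg_left.congr_left fun ε => by
    simp only [Pi.sub_apply]; ring
end

section
/- Let p ∈ (0,1), β, γ > 0, q₁, q₂ > 0, and define q by 1/q = (1-p)/q₁ + p/q₂. For every r > 0, (1-p) e^{-βr/(γq₁)} + p e^{-βr/(γq₂)} ≥ e^{-βr/(γq)}. Consequently, if r₂ ∈ (0,1) solves (1-p)e^{-β r/(γq₁)} + p e^{-β r/(γq₂)} + r = 1 and r₁ ∈ (0,1) solves e^{-β r/(γ q)} + r = 1, then r₂ ≤ r₁. -/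
open Real Set

/-!
Since `1/q` is the `p`-weighted mean of `1/q₁` and `1/q₂`, the exponent `-βr/(γq)` is the same
mean of `-βr/(γq₁)` and `-βr/(γq₂)`, so the first claim is Jensen's inequality for `exp`.
For the second, `φ r = e^{cr} + r` with `c = -β/(γq)` is strictly convex and `φ 0 = φ r₁ = 1`,
so `φ > 1` beyond `r₁`; but the first claim and the equation for `r₂` give `φ r₂ ≤ 1`.
-/

theorem strictConvexOn_exp_mul_add_id {c : ℝ} (hc : c ≠ 0) :
    StrictConvexOn ℝ univ (fun r => exp (c * r) + r) := by
  refine StrictConvexOn.add_convexOn ?_ (convexOn_id convex_univ)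
  refine ⟨convex_univ, fun x _ y _ hxy a b ha hb hab => ?_⟩
  have hcxy : c * x ≠ c * y := by simpa [hc] using hxy
  simpa only [smul_eq_mul, mul_add, mul_left_comm c] using
    strictConvexOn_exp.2 (mem_univ _) (mem_univ _) hcxy ha hb hab

theorem le_of_exp_mul_add_eq_one {c r₁ r₂ : ℝ} (hr₁ : 0 < r₁)
    (h₁ : exp (c * r₁) + r₁ = 1) (h₂ : exp (c * r₂) + r₂ ≤ 1) : r₂ ≤ r₁ := by
  have hc : c ≠ 0 := by
    rintro rfl
    simp only [zero_mul, exp_zero] at h₁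
    linarith
  by_contra! hlt
  have hslope := (strictConvexOn_exp_mul_add_id hc).slope_strict_mono_adjacent
    (mem_univ 0) (mem_univ r₂) hr₁ hlt
  simp only [mul_zero, exp_zero, add_zero, sub_zero, h₁, sub_self, zero_div] at hslope
  have : (exp (c * r₂) + r₂ - 1) / (r₂ - r₁) ≤ 0 :=
    div_nonpos_of_nonpos_of_nonneg (by linarith) (by linarith)
  linarith

theorem exp_div_le_of_one_div_eq {p q q₁ q₂ : ℝ} (hp₀ : 0 ≤ p) (hp₁ : p ≤ 1)
    (hq : 1 / q = (1 - p) / q₁ + p / q₂) (a : ℝ) :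
    exp (a / q) ≤ (1 - p) * exp (a / q₁) + p * exp (a / q₂) := by
  have hmean : a / q = (1 - p) * (a / q₁) + p * (a / q₂) := by
    rw [div_eq_mul_one_div, hq]
    ring
  rw [hmean]
  exact convexOn_exp.2 (mem_univ _) (mem_univ _) (by linarith) hp₀ (by ring)

theorem two_group_epidemic_size_comparison_general
    (p β γ q₁ q₂ q : ℝ)
    (hp : p ∈ Set.Ioo (0 : ℝ) 1)
    (hq : 1 / q = (1 - p) / q₁ + p / q₂) :
    (∀ r > (0 : ℝ),
      Real.exp (-β * r / (γ * q)) ≤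
        (1 - p) * Real.exp (-β * r / (γ * q₁)) + p * Real.exp (-β * r / (γ * q₂))) ∧
    (∀ r₁ ∈ Set.Ioo (0 : ℝ) 1, ∀ r₂ ∈ Set.Ioo (0 : ℝ) 1,
      Real.exp (-β * r₁ / (γ * q)) + r₁ = 1 →
      (1 - p) * Real.exp (-β * r₂ / (γ * q₁))
        + p * Real.exp (-β * r₂ / (γ * q₂)) + r₂ = 1 →
      r₂ ≤ r₁) := by
  have jensen : ∀ r, exp (-β * r / (γ * q)) ≤
      (1 - p) * exp (-β * r / (γ * q₁)) + p * exp (-β * r / (γ * q₂)) := fun r => by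
    simpa only [div_div] using exp_div_le_of_one_div_eq hp.1.le hp.2.le hq (-β * r / γ)
  refine ⟨fun r _ => jensen r, ?_⟩
  rintro r₁ ⟨hr₁, -⟩ r₂ - h₁ h₂
  have hlin : ∀ r, -β * r / (γ * q) = -β / (γ * q) * r := fun r => by ring
  refine le_of_exp_mul_add_eq_one hr₁ (c := -β / (γ * q)) ?_ ?_
  · rwa [← hlin]
  · rw [← hlin]
    linarith [jensen r₂]

/-- Jensen's inequality for the two-group model and comparison
of epidemic sizes: with 1/q = (1-p)/q₁ + p/q₂, for every r > 0,
(1-p)e^{-βr/(γq₁)} + p e^{-βr/(γq₂)} ≥ e^{-βr/(γq)}; consequently the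
two-group epidemic size r₂ is at most the homogeneous one r₁. -/
theorem two_group_epidemic_size_comparison
    (p β γ q₁ q₂ q : ℝ)
    (hp : p ∈ Set.Ioo (0 : ℝ) 1) (hβ : 0 < β) (hγ : 0 < γ)
    (hq₁ : 0 < q₁) (hq₂ : 0 < q₂)
    (hq : 1 / q = (1 - p) / q₁ + p / q₂) :
    (∀ r > (0 : ℝ),
      Real.exp (-β * r / (γ * q)) ≤
        (1 - p) * Real.exp (-β * r / (γ * q₁)) + p * Real.exp (-β * r / (γ * q₂))) ∧
    (∀ r₁ ∈ Set.Ioo (0 : ℝ) 1, ∀ r₂ ∈ Set.Ioo (0 : ℝ) 1,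
      Real.exp (-β * r₁ / (γ * q)) + r₁ = 1 →
      (1 - p) * Real.exp (-β * r₂ / (γ * q₁))
        + p * Real.exp (-β * r₂ / (γ * q₂)) + r₂ = 1 →
      r₂ ≤ r₁) :=
  two_group_epidemic_size_comparison_general p β γ q₁ q₂ q hp hq
end

section
/- For the K-group SEIR system s_k' = -β_k s_k i, e' = (Σ_k β_k s_k) i - α e, i' = α e - γ i, r' = γ i with all β_k > 0 and s_k > 0, the function a(t) = (Σ_k β_k s_k(t))/(β̄ s(t)), where s = Σ_k s_k and β̄ = Σ_k p_k β_k with p_k = s_k(0)/s(0), satisfies a(0) = 1 and a'(t) ≤ 0 for all t ≥ 0 at which i(t) ≥ 0; i.e., a is nonincreasing. -/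
/-!
Write `s = ∑ₖ sₖ` and `N = ∑ₖ βₖ sₖ`, so that `a = (N / s) / β̄` with `β̄ = N(0) / s(0)`.
Along the flow `N' = -(∑ₖ βₖ² sₖ) i` and `s' = -N i`, hence
`(N / s)' = -i (s ∑ₖ βₖ² sₖ - N²) / s²`, and the bracket is nonnegative by Cauchy–Schwarz
with weights `sₖ`.
-/

open Finset

section Depletion

variable {ι : Type*} [Fintype ι] {β : ι → ℝ} {x : ι → ℝ → ℝ} {i : ℝ → ℝ}

theorem hasDerivAt_sum_mul_of_depletion (c : ι → ℝ) {t : ℝ}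
    (hx : ∀ k, HasDerivAt (x k) (-β k * x k t * i t) t) :
    HasDerivAt (fun t => ∑ k, c k * x k t) (-(∑ k, c k * β k * x k t) * i t) t := by
  refine (HasDerivAt.fun_sum fun k _ => (hx k).const_mul (c k)).congr_deriv ?_
  rw [neg_mul, sum_mul, ← sum_neg_distrib]
  exact sum_congr rfl fun k _ => by ring

theorem hasDerivAt_weightedMean_of_depletion {t : ℝ} (ht : ∑ k, x k t ≠ 0)
    (hx : ∀ k, HasDerivAt (x k) (-β k * x k t * i t) t) :
    HasDerivAt (fun t => (∑ k, β k * x k t) / ∑ k, x k t)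
      (-i t * ((∑ k, x k t) * (∑ k, β k ^ 2 * x k t) - (∑ k, β k * x k t) ^ 2)
        / (∑ k, x k t) ^ 2) t := by
  have hN : HasDerivAt (fun t => ∑ k, β k * x k t) (-(∑ k, β k ^ 2 * x k t) * i t) t := by
    simpa only [← sq] using hasDerivAt_sum_mul_of_depletion β hx
  have hs : HasDerivAt (fun t => ∑ k, x k t) (-(∑ k, β k * x k t) * i t) t := by
    simpa using hasDerivAt_sum_mul_of_depletion (fun _ => 1) hx
  refine (hN.div hs ht).congr_deriv ?_
  ring

theorem antitoneOn_weightedMean_of_depletion [Nonempty ι] {D : Set ℝ} (hD : Convex ℝ D)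
    (hxpos : ∀ k t, 0 < x k t) (hx : ∀ k t, HasDerivAt (x k) (-β k * x k t * i t) t)
    (hi : ∀ t ∈ interior D, 0 ≤ i t) :
    AntitoneOn (fun t => (∑ k, β k * x k t) / ∑ k, x k t) D := by
  have hs : ∀ t, 0 < ∑ k, x k t := fun t => sum_pos (fun k _ => hxpos k t) univ_nonempty
  have hderiv := fun t => hasDerivAt_weightedMean_of_depletion (hs t).ne' (hx · t)
  refine antitoneOn_of_hasDerivWithinAt_nonpos hD
    (fun t _ => (hderiv t).continuousAt.continuousWithinAt) (fun t _ => (hderiv t).hasDerivWithinAt)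
    fun t ht => div_nonpos_of_nonpos_of_nonneg ?_ (sq_nonneg _)
  have cauchySchwarz : (∑ k, β k * x k t) ^ 2 ≤ (∑ k, β k ^ 2 * x k t) * ∑ k, x k t :=
    sum_sq_le_sum_mul_sum_of_sq_le_mul univ
      (fun k _ => mul_nonneg (sq_nonneg _) (hxpos k t).le) (fun k _ => (hxpos k t).le)
      (fun k _ => le_of_eq (by ring))
  rw [neg_mul]
  exact neg_nonpos.mpr (mul_nonneg (hi t ht) (by linarith))

end Depletion

theorem multigroup_attenuation_factor_general
    (K : ℕ) (hK : 0 < K)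
    (β : Fin K → ℝ) (hβ : ∀ k, 0 < β k)
    (sk : Fin K → ℝ → ℝ) (i : ℝ → ℝ)
    (hskpos : ∀ k t, 0 < sk k t)
    (hsk : ∀ k t, HasDerivAt (sk k) (-β k * sk k t * i t) t)
    (hinn : ∀ t ≥ (0 : ℝ), 0 ≤ i t) :
    let s : ℝ → ℝ := fun t => ∑ k, sk k t
    let βbar : ℝ := ∑ k, (sk k 0 / s 0) * β k
    let a : ℝ → ℝ := fun t => (∑ k, β k * sk k t) / (βbar * s t)
    a 0 = 1 ∧ AntitoneOn a (Set.Ici 0) := by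
  intro s βbar a
  have : Nonempty (Fin K) := Fin.pos_iff_nonempty.mp hK
  have hs0 : 0 < s 0 := sum_pos (fun k _ => hskpos k 0) univ_nonempty
  have hN0 : 0 < ∑ k, β k * sk k 0 := sum_pos (fun k _ => mul_pos (hβ k) (hskpos k 0)) univ_nonempty
  have hβbar : βbar = (∑ k, β k * sk k 0) / s 0 := by
    simp only [βbar, sum_div]
    exact sum_congr rfl fun k _ => by ring
  have ha : a = fun t => (∑ k, β k * sk k t) / s t / βbar := by
    funext t
    simp only [a, div_div, mul_comm]
  refine ⟨?_, ?_⟩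
  · simp only [ha, hβbar]
    field_simp
  · rw [ha]
    intro t ht u hu htu
    refine div_le_div_of_nonneg_right ?_ (by rw [hβbar]; positivity)
    exact antitoneOn_weightedMean_of_depletion (convex_Ici 0) hskpos hsk
      (fun t ht => hinn t (interior_subset ht)) ht hu htu

/-- in the K-group SEIR model, the attenuation factor
a(t) = (Σ_k β_k s_k(t))/(β̄ s(t)), with β̄ = Σ_k p_k β_k and
p_k = s_k(0)/s(0), satisfies a(0) = 1 and is nonincreasing on [0,∞)
when i ≥ 0 there. -/
theorem multigroup_attenuation_factor
    (K : ℕ) (hK : 0 < K)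
    (α γ : ℝ) (hα : 0 < α) (hγ : 0 < γ)
    (β : Fin K → ℝ) (hβ : ∀ k, 0 < β k)
    (sk : Fin K → ℝ → ℝ) (e i r : ℝ → ℝ)
    (hskpos : ∀ k t, 0 < sk k t)
    (hsk : ∀ k t, HasDerivAt (sk k) (-β k * sk k t * i t) t)
    (he : ∀ t, HasDerivAt e ((∑ k, β k * sk k t) * i t - α * e t) t)
    (hi : ∀ t, HasDerivAt i (α * e t - γ * i t) t)
    (hr : ∀ t, HasDerivAt r (γ * i t) t)
    (hinn : ∀ t ≥ (0 : ℝ), 0 ≤ i t) :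
    let s : ℝ → ℝ := fun t => ∑ k, sk k t
    let βbar : ℝ := ∑ k, (sk k 0 / s 0) * β k
    let a : ℝ → ℝ := fun t => (∑ k, β k * sk k t) / (βbar * s t)
    a 0 = 1 ∧ AntitoneOn a (Set.Ici 0) :=
  multigroup_attenuation_factor_general K hK β hβ sk i hskpos hsk hinn
end

section
/- In the K-group SEIR model with average reproduction ratio R̄ = β̄/γ > 1, suppose there is a time t_p at which (e + i)'(t_p) = 0, i.e. β̄ a(t_p) s(t_p) = γ, where a is the nonincreasing attenuation factor with a(0) = 1 and a ≤ 1. Then s(t_p) ≥ 1/R̄, and the peak value satisfies (e+i)(t_p) ≤ (e+i)(0) + h(1/R̄) - h(s(0)) = 1 - (1/R̄)(1 + log(R̄ s(0))), where h(x) = (1/R̄) log x - x, assuming r(0) = 0 and s(0) ≥ 1/R̄. -/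
open Real Set

/-!
Along solutions, `L = e + i + s - (γ/β̄) log s` has derivative `γ i (a - 1) ≤ 0`, so
`L(t_p) ≤ L(0) = 1 - (γ/β̄) log s(0)`. At the peak, `a ≤ 1` forces `s(t_p) ≥ γ/β̄`, and
`x ↦ (γ/β̄) log x - x` is maximal at `x = γ/β̄`, which bounds `(e + i)(t_p) = L - s + (γ/β̄) log s`.
-/

theorem Real.mul_log_sub_le_mul_log_sub {c x : ℝ} (hc : 0 < c) (hx : 0 < x) :
    c * log x - x ≤ c * log c - c := by
  have hlog : log (x / c) ≤ x / c - 1 := log_le_sub_one_of_pos (by positivity)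
  rw [log_div hx.ne' hc.ne'] at hlog
  calc c * log x - x = c * (log x - log c) + c * log c - x := by ring
    _ ≤ c * (x / c - 1) + c * log c - x := by gcongr
    _ = c * log c - c := by field_simp; ring

theorem div_le_of_mul_mul_eq_of_le_one {β γ a s : ℝ} (hβ : 0 < β) (hs : 0 ≤ s) (ha : a ≤ 1)
    (h : β * a * s = γ) : γ / β ≤ s := by
  rw [div_le_iff₀ hβ, ← h, mul_assoc, mul_comm s β]
  exact mul_le_mul_of_nonneg_left (mul_le_of_le_one_left hs ha) hβ.le

noncomputable def seirLyapunov (c : ℝ) (e i s : ℝ → ℝ) (t : ℝ) : ℝ :=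
  e t + i t + s t - c * log (s t)

section Lyapunov

variable {β γ : ℝ} {s e i a : ℝ → ℝ}

theorem hasDerivAt_seirLyapunov (hβ : β ≠ 0) {t : ℝ} (hst : s t ≠ 0)
    (hs : HasDerivAt s (-(β * a t * s t * i t)) t)
    (hei : HasDerivAt (fun u => e u + i u) (β * a t * s t * i t - γ * i t) t) :
    HasDerivAt (seirLyapunov (γ / β) e i s) (γ * i t * (a t - 1)) t := by
  refine ((hei.add hs).sub ((hs.log hst).const_mul (γ / β))).congr_deriv ?_
  field_simp
  ring

theorem antitoneOn_seirLyapunov (hβ : 0 < β) (hγ : 0 ≤ γ)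
    (hspos : ∀ t ≥ (0 : ℝ), 0 < s t) (hinn : ∀ t ≥ (0 : ℝ), 0 ≤ i t)
    (hale : ∀ t ≥ (0 : ℝ), a t ≤ 1)
    (hs : ∀ t, HasDerivAt s (-(β * a t * s t * i t)) t)
    (hei : ∀ t, HasDerivAt (fun u => e u + i u) (β * a t * s t * i t - γ * i t) t) :
    AntitoneOn (seirLyapunov (γ / β) e i s) (Ici 0) := by
  have hderiv : ∀ t ≥ (0 : ℝ), HasDerivAt (seirLyapunov (γ / β) e i s) (γ * i t * (a t - 1)) t :=
    fun t ht => hasDerivAt_seirLyapunov hβ.ne' (hspos t ht).ne' (hs t) (hei t)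
  refine antitoneOn_of_hasDerivWithinAt_nonpos (f' := fun t => γ * i t * (a t - 1)) (convex_Ici 0)
    (fun t ht => (hderiv t ht).continuousAt.continuousWithinAt) ?_ ?_
  · intro t ht
    rw [interior_Ici] at ht
    exact (hderiv t ht.le).hasDerivWithinAt
  · intro t ht
    rw [interior_Ici] at ht
    exact mul_nonpos_of_nonneg_of_nonpos (mul_nonneg hγ (hinn t ht.le))
      (sub_nonpos.mpr (hale t ht.le))

end Lyapunov

theorem multigroup_peak_bound_general
    (βbar γ : ℝ) (hβbar : 0 < βbar) (hγ : 0 < γ)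
    (s e i a : ℝ → ℝ)
    (hspos : ∀ t ≥ (0 : ℝ), 0 < s t)
    (hinn : ∀ t ≥ (0 : ℝ), 0 ≤ i t)
    (hale : ∀ t ≥ (0 : ℝ), a t ≤ 1)
    (hs : ∀ t, HasDerivAt s (-(βbar * a t * s t * i t)) t)
    (hei : ∀ t, HasDerivAt (fun u => e u + i u)
      (βbar * a t * s t * i t - γ * i t) t)
    (hsum : s 0 + e 0 + i 0 = 1)
    (tp : ℝ) (htp : 0 ≤ tp)
    (hpeak : βbar * a tp * s tp = γ) :
    1 / (βbar / γ) ≤ s tp ∧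
      e tp + i tp ≤
        1 - (1 / (βbar / γ)) * (1 + Real.log ((βbar / γ) * s 0)) := by
  set c := γ / βbar
  have hc : 0 < c := by positivity
  have hstp : 0 < s tp := hspos tp htp
  have hL : seirLyapunov c e i s tp ≤ seirLyapunov c e i s 0 :=
    antitoneOn_seirLyapunov hβbar hγ.le hspos hinn hale hs hei self_mem_Ici htp htp
  have hmax : c * log (s tp) - s tp ≤ c * log c - c := mul_log_sub_le_mul_log_sub hc hstp
  have hlog : log ((βbar / γ) * s 0) = -log c + log (s 0) := by
    rw [log_mul (by positivity) (hspos 0 le_rfl).ne', ← inv_div, log_inv]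
  rw [one_div_div, hlog]
  refine ⟨div_le_of_mul_mul_eq_of_le_one hβbar hstp.le (hale tp htp) hpeak, ?_⟩
  unfold seirLyapunov at hL
  linarith

/-- peak bound for the K-group SEIR model. With β̄ the mean
transmission rate, R̄ = β̄/γ > 1, a the nonincreasing attenuation factor with
a(0) = 1 and a ≤ 1, r(0) = 0 (so s(0) + e(0) + i(0) = 1) and s(0) ≥ 1/R̄,
at any time t_p with β̄ a(t_p) s(t_p) = γ one has s(t_p) ≥ 1/R̄ and
(e+i)(t_p) ≤ 1 - (1/R̄)(1 + log(R̄ s(0))). -/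
theorem multigroup_peak_bound
    (βbar γ : ℝ) (hβbar : 0 < βbar) (hγ : 0 < γ)
    (hR : 1 < βbar / γ)
    (s e i a : ℝ → ℝ)
    (hspos : ∀ t ≥ (0 : ℝ), 0 < s t)
    (hinn : ∀ t ≥ (0 : ℝ), 0 ≤ i t)
    (ha0 : a 0 = 1) (hale : ∀ t ≥ (0 : ℝ), a t ≤ 1)
    (hamono : AntitoneOn a (Set.Ici 0))
    (hs : ∀ t, HasDerivAt s (-(βbar * a t * s t * i t)) t)
    (hei : ∀ t, HasDerivAt (fun u => e u + i u)
      (βbar * a t * s t * i t - γ * i t) t)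
    (hsum : s 0 + e 0 + i 0 = 1)
    (hs0 : 1 / (βbar / γ) ≤ s 0)
    (tp : ℝ) (htp : 0 ≤ tp)
    (hpeak : βbar * a tp * s tp = γ) :
    1 / (βbar / γ) ≤ s tp ∧
      e tp + i tp ≤
        1 - (1 / (βbar / γ)) * (1 + Real.log ((βbar / γ) * s 0)) :=
  multigroup_peak_bound_general βbar γ hβbar hγ s e i a hspos hinn hale hs hei hsum tp htp hpeak
end

section
/- Let p_1, ..., p_K ≥ 0 with Σ p_k = 1, R_k > 0, R̄ = Σ p_k R_k > 1, and s₀ ∈ (0, 1]. If ζ ∈ (0, s₀) satisfies 1 - ζ = s₀ Σ_k p_k e^{-R_k ζ}, and ζ₀ ∈ (0, s₀) satisfies 1 - ζ₀ = s₀ e^{-R̄ ζ₀}, then ζ ≤ ζ₀. -/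
/-!
By Jensen's inequality for `exp`, `1 - ζ = s₀ ∑ pₖ e^{-Rₖ ζ} ≥ s₀ e^{-R̄ ζ}`, i.e. the homogeneous
defect `f x = 1 - x - s₀ e^{-R̄ x}` satisfies `f ζ ≥ 0`. Also `f 0 = 1 - s₀ ≥ 0` and `f ζ₀ = 0`.
Since `f` is strictly concave, it is positive strictly between `0` and `ζ`, so `ζ₀` cannot lie there.
-/

open Real Finset

theorem exp_sum_mul_le_sum_mul_exp {ι : Type*} (t : Finset ι) {w : ι → ℝ} (x : ι → ℝ)
    (hw : ∀ i ∈ t, 0 ≤ w i) (hw₁ : ∑ i ∈ t, w i = 1) :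
    exp (∑ i ∈ t, w i * x i) ≤ ∑ i ∈ t, w i * exp (x i) :=
  convexOn_exp.map_sum_le hw hw₁ fun _ _ => Set.mem_univ _

theorem strictConcaveOn_one_sub_sub_mul_exp {s r : ℝ} (hs : 0 < s) (hr : r ≠ 0) :
    StrictConcaveOn ℝ Set.univ fun x => 1 - x - s * exp (-r * x) := by
  refine ⟨convex_univ, fun x _ y _ hxy a b ha hb hab => ?_⟩
  have hexp := strictConvexOn_exp.2 (Set.mem_univ (-r * x)) (Set.mem_univ (-r * y))
    (by simpa [hr] using hxy) ha hb hab
  have hcomb : a • (-r * x) + b • (-r * y) = -r * (a • x + b • y) := by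
    simp only [smul_eq_mul]; ring
  rw [hcomb] at hexp
  simp only [smul_eq_mul] at hexp ⊢
  nlinarith [mul_lt_mul_of_pos_left hexp hs]

theorem multigroup_epidemic_size_le_homogeneous_general
    (K : ℕ) (p R : Fin K → ℝ)
    (hp : ∀ k, 0 ≤ p k) (hpsum : ∑ k, p k = 1)
    (hRbar : 1 < ∑ k, p k * R k)
    (s₀ : ℝ) (hs₀ : s₀ ∈ Set.Ioc (0 : ℝ) 1)
    (ζ ζ₀ : ℝ)
    (hζ : ζ ∈ Set.Ioo 0 s₀)
    (hζ₀ : ζ₀ ∈ Set.Ioo 0 s₀)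
    (heq : 1 - ζ = s₀ * ∑ k, p k * Real.exp (-(R k) * ζ))
    (heq₀ : 1 - ζ₀ = s₀ * Real.exp (-(∑ k, p k * R k) * ζ₀)) :
    ζ ≤ ζ₀ := by
  set r := ∑ k, p k * R k
  let f : ℝ → ℝ := fun x => 1 - x - s₀ * exp (-r * x)
  have hf_conc : StrictConcaveOn ℝ Set.univ f :=
    strictConcaveOn_one_sub_sub_mul_exp hs₀.1 (by linarith)
  have hf_zero : 0 ≤ f 0 := by simp [f, hs₀.2]
  have hf_ζ : 0 ≤ f ζ := by
    have hjensen : exp (-r * ζ) ≤ ∑ k, p k * exp (-(R k) * ζ) := by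
      convert exp_sum_mul_le_sum_mul_exp univ (fun k => -(R k) * ζ) (fun k _ => hp k) hpsum
        using 2
      simp only [r, Finset.sum_mul, ← Finset.sum_neg_distrib, neg_mul, mul_neg, mul_assoc]
    have := mul_le_mul_of_nonneg_left hjensen hs₀.1.le
    simp only [f]; linarith
  have hf_ζ₀ : f ζ₀ = 0 := by simp only [f]; linarith
  by_contra! hlt
  have hseg : ζ₀ ∈ openSegment ℝ 0 ζ := by
    rw [openSegment_eq_Ioo hζ.1]; exact ⟨hζ₀.1, hlt⟩
  have hpos : 0 < f ζ₀ := (le_min hf_zero hf_ζ).trans_lt <|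
    hf_conc.lt_on_openSegment (Set.mem_univ _) (Set.mem_univ _) hζ.1.ne hseg
  linarith

/-- the total epidemic size ζ of the K-group model is at most
the epidemic size ζ₀ of the homogeneous model with the averaged reproduction
ratio R̄ = Σ p_k R_k > 1. -/
theorem multigroup_epidemic_size_le_homogeneous
    (K : ℕ) (p R : Fin K → ℝ)
    (hp : ∀ k, 0 ≤ p k) (hpsum : ∑ k, p k = 1)
    (hR : ∀ k, 0 < R k)
    (hRbar : 1 < ∑ k, p k * R k)
    (s₀ : ℝ) (hs₀ : s₀ ∈ Set.Ioc (0 : ℝ) 1)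
    (ζ ζ₀ : ℝ)
    (hζ : ζ ∈ Set.Ioo 0 s₀)
    (hζ₀ : ζ₀ ∈ Set.Ioo 0 s₀)
    (heq : 1 - ζ = s₀ * ∑ k, p k * Real.exp (-(R k) * ζ))
    (heq₀ : 1 - ζ₀ = s₀ * Real.exp (-(∑ k, p k * R k) * ζ₀)) :
    ζ ≤ ζ₀ :=
  multigroup_epidemic_size_le_homogeneous_general K p R hp hpsum hRbar s₀ hs₀ ζ ζ₀ hζ hζ₀ heq heq₀
end
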